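/- arXiv:1706.01634 — 9 statements merged into one kernel-verified Lean document; each statement's English description precedes it below -/
import Mathlib

section
/- Let (X, d) be a complete metric space and T : X → X a mapping such that for some nonnegative reals α, β, γ, δ, η with α + β + γ + δ + η < 1, d(Tx, Ty) ≤ α·d(x,y) + β·d(x,Tx) + γ·d(y,Ty) + δ·d(x,Ty) + η·d(y,Tx) for all x, y ∈ X. Then T has a unique fixed point in X. -/
/-!
Applying the Hardy–Rogers inequality to the pairs `(z, T z)` and `(T z, z)` and adding the two
bounds symmetrises the coefficients: with `s = β + γ + δ + η` and the triangle inequality for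
`d(z, T² z)`, one gets `d(T z, T² z) ≤ k · d(z, T z)` for `k = (2α + s) / (2 - s) < 1`. Hence every
orbit is Cauchy, its limit `x` satisfies `d(T x, x) ≤ (β + η) d(x, T x)` in the limit, and two fixed
points satisfy `d(x, y) ≤ (α + δ + η) d(x, y)`.
-/

open Filter Topology Function

section Orbit

variable {X : Type*} [PseudoMetricSpace X]

theorem dist_iterate_succ_le_geometric_of_dist_apply_apply_le {f : X → X} {k : ℝ} (hk : 0 ≤ k)
    (hf : ∀ z, dist (f z) (f (f z)) ≤ k * dist z (f z)) (x : X) (n : ℕ) :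
    dist (f^[n] x) (f^[n + 1] x) ≤ dist x (f x) * k ^ n := by
  induction n with
  | zero => simp
  | succ n ih =>
    calc dist (f^[n + 1] x) (f^[n + 2] x)
        = dist (f (f^[n] x)) (f (f (f^[n] x))) := by
          simp only [iterate_succ_apply']
      _ ≤ k * dist (f^[n] x) (f^[n + 1] x) := by
          rw [iterate_succ_apply']
          exact hf _
      _ ≤ k * (dist x (f x) * k ^ n) := by gcongr
      _ = dist x (f x) * k ^ (n + 1) := by ring

theorem cauchySeq_iterate_of_dist_apply_apply_le {f : X → X} {k : ℝ} (hk₀ : 0 ≤ k) (hk₁ : k < 1)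
    (hf : ∀ z, dist (f z) (f (f z)) ≤ k * dist z (f z)) (x : X) :
    CauchySeq fun n => f^[n] x :=
  cauchySeq_of_le_geometric k _ hk₁ (dist_iterate_succ_le_geometric_of_dist_apply_apply_le hk₀ hf x)

end Orbit

def IsHardyRogers {X : Type*} [PseudoMetricSpace X] (T : X → X) (α β γ δ η : ℝ) : Prop :=
  ∀ x y, dist (T x) (T y) ≤
    α * dist x y + β * dist x (T x) + γ * dist y (T y) + δ * dist x (T y) + η * dist y (T x)

namespace IsHardyRogers

section PseudoMetric

variable {X : Type*} [PseudoMetricSpace X] {T : X → X} {α β γ δ η : ℝ}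

theorem two_sub_mul_dist_apply_apply_le (hT : IsHardyRogers T α β γ δ η) (hδ : 0 ≤ δ)
    (hη : 0 ≤ η) (z : X) :
    (2 - (β + γ + δ + η)) * dist (T z) (T (T z)) ≤
      (2 * α + β + γ + δ + η) * dist z (T z) := by
  have forward := hT z (T z)
  have backward := hT (T z) z
  have htri : dist z (T (T z)) ≤ dist z (T z) + dist (T z) (T (T z)) := dist_triangle _ _ _
  have hδtri := mul_le_mul_of_nonneg_left htri hδ
  have hηtri := mul_le_mul_of_nonneg_left htri hη
  rw [dist_self, dist_comm (T z) z, dist_comm (T (T z)) (T z)] at backward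
  rw [dist_self] at forward
  linarith

theorem dist_apply_apply_le (hT : IsHardyRogers T α β γ δ η) (hα : 0 ≤ α) (hδ : 0 ≤ δ)
    (hη : 0 ≤ η) (hsum : α + β + γ + δ + η < 1) (z : X) :
    dist (T z) (T (T z)) ≤
      (2 * α + β + γ + δ + η) / (2 - (β + γ + δ + η)) * dist z (T z) := by
  rw [div_mul_eq_mul_div, le_div_iff₀ (by linarith), mul_comm]
  exact hT.two_sub_mul_dist_apply_apply_le hδ hη z

theorem cauchySeq_iterate (hT : IsHardyRogers T α β γ δ η) (hα : 0 ≤ α) (hβ : 0 ≤ β)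
    (hγ : 0 ≤ γ) (hδ : 0 ≤ δ) (hη : 0 ≤ η) (hsum : α + β + γ + δ + η < 1) (x : X) :
    CauchySeq fun n => T^[n] x := by
  have hden : 0 < 2 - (β + γ + δ + η) := by linarith
  refine cauchySeq_iterate_of_dist_apply_apply_le (by positivity) ?_
    (hT.dist_apply_apply_le hα hδ hη hsum) x
  rw [div_lt_one hden]
  linarith

end PseudoMetric

variable {X : Type*} [MetricSpace X] {T : X → X} {α β γ δ η : ℝ}

theorem isFixedPt_of_tendsto_iterate (hT : IsHardyRogers T α β γ δ η) (hβη : β + η < 1)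
    {x₀ x : X} (hx : Tendsto (fun n => T^[n] x₀) atTop (𝓝 x)) : IsFixedPt T x := by
  have hx' : Tendsto (fun n => T^[n + 1] x₀) atTop (𝓝 x) := hx.comp (tendsto_add_atTop_nat 1)
  -- `T` need not be continuous: `T (T^[n] x₀)` is the orbit point `T^[n + 1] x₀`, whose limit is known.
  have hbound : ∀ n, dist (T x) (T^[n + 1] x₀) ≤
      α * dist x (T^[n] x₀) + β * dist x (T x) + γ * dist (T^[n] x₀) (T^[n + 1] x₀) +
        δ * dist x (T^[n + 1] x₀) + η * dist (T^[n] x₀) (T x) := fun n => by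
    rw [iterate_succ_apply']
    exact hT x _
  have hrhs : Continuous fun p : X × X =>
      α * dist x p.1 + β * dist x (T x) + γ * dist p.1 p.2 + δ * dist x p.2 + η * dist p.1 (T x) := by
    fun_prop
  have hlim := le_of_tendsto_of_tendsto' (tendsto_const_nhds.dist hx')
    ((hrhs.tendsto (x, x)).comp (hx.prodMk_nhds hx')) hbound
  simp only [dist_self, mul_zero, add_zero, zero_add, dist_comm x (T x)] at hlim
  exact dist_le_zero.mp (by nlinarith [dist_nonneg (x := T x) (y := x)])

theorem eq_of_isFixedPt (hT : IsHardyRogers T α β γ δ η) (hαδη : α + δ + η < 1) {x y : X}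
    (hx : IsFixedPt T x) (hy : IsFixedPt T y) : x = y := by
  have h := hT x y
  rw [hx, hy, dist_self, dist_self, dist_comm y x] at h
  exact dist_le_zero.mp (by nlinarith [dist_nonneg (x := x) (y := y)])

end IsHardyRogers

theorem hardy_rogers_fixed_point {X : Type*} [MetricSpace X] [CompleteSpace X] [Nonempty X]
    (T : X → X) (α β γ δ η : ℝ)
    (hα : 0 ≤ α) (hβ : 0 ≤ β) (hγ : 0 ≤ γ) (hδ : 0 ≤ δ) (hη : 0 ≤ η)
    (hsum : α + β + γ + δ + η < 1)
    (hT : ∀ x y : X, dist (T x) (T y) ≤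
      α * dist x y + β * dist x (T x) + γ * dist y (T y) + δ * dist x (T y) + η * dist y (T x)) :
    ∃! x : X, T x = x := by
  have hHR : IsHardyRogers T α β γ δ η := hT
  obtain ⟨x₀⟩ := ‹Nonempty X›
  obtain ⟨x, hx⟩ := cauchySeq_tendsto_of_complete (hHR.cauchySeq_iterate hα hβ hγ hδ hη hsum x₀)
  refine ⟨x, hHR.isFixedPt_of_tendsto_iterate (by linarith) hx, fun y hy => ?_⟩
  exact hHR.eq_of_isFixedPt (by linarith) hy (hHR.isFixedPt_of_tendsto_iterate (by linarith) hx)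
end

section
/- Let (X, d) be a complete metric space and T : X → X a mapping such that for some β ∈ [0, 1/2), d(Tx, Ty) ≤ β·(d(x,Tx) + d(y,Ty)) for all x, y ∈ X. Then T has a unique fixed point in X. -/
/-!
Applying the Kannan condition to `x` and `T x` gives `d(T x, T² x) ≤ β / (1 - β) · d(x, T x)`,
and `β / (1 - β) < 1` because `β < 1 / 2`; so the orbit of any point moves by geometrically
decreasing steps and is Cauchy. At its limit `x` the condition, applied to `x` and an orbit point
`u`, bounds `(1 - β) · d(x, T x)` by `d(x, T u) + β · d(u, T u)`, which tends to `0`: no continuity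
of `T` is needed. Two fixed points `x`, `y` satisfy `d(x, y) = d(T x, T y) ≤ β · (0 + 0)`.
-/

open Filter Topology

def IsKannanMap {X : Type*} [PseudoMetricSpace X] (β : ℝ) (T : X → X) : Prop :=
  ∀ x y, dist (T x) (T y) ≤ β * (dist x (T x) + dist y (T y))

theorem dist_iterate_succ_le_geometric_of_dist_apply_apply_le_s1 {X : Type*} [PseudoMetricSpace X]
    {T : X → X} {r : ℝ} (hr : 0 ≤ r) (hT : ∀ x, dist (T x) (T (T x)) ≤ r * dist x (T x))
    (x : X) (n : ℕ) : dist (T^[n] x) (T^[n + 1] x) ≤ dist x (T x) * r ^ n := by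
  induction n with
  | zero => simp
  | succ n ih =>
    calc dist (T^[n + 1] x) (T^[n + 2] x)
        = dist (T (T^[n] x)) (T (T (T^[n] x))) := by
          simp only [Function.iterate_succ_apply']
      _ ≤ r * dist (T^[n] x) (T (T^[n] x)) := hT _
      _ = r * dist (T^[n] x) (T^[n + 1] x) := by rw [Function.iterate_succ_apply']
      _ ≤ r * (dist x (T x) * r ^ n) := by gcongr
      _ = dist x (T x) * r ^ (n + 1) := by ring

theorem cauchySeq_iterate_of_dist_apply_apply_le_s1 {X : Type*} [PseudoMetricSpace X]
    {T : X → X} {r : ℝ} (hr0 : 0 ≤ r) (hr1 : r < 1)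
    (hT : ∀ x, dist (T x) (T (T x)) ≤ r * dist x (T x)) (x : X) :
    CauchySeq fun n ↦ T^[n] x :=
  cauchySeq_of_le_geometric r _ hr1 (dist_iterate_succ_le_geometric_of_dist_apply_apply_le_s1 hr0 hT x)

namespace IsKannanMap

variable {X : Type*} {β : ℝ} {T : X → X}

theorem dist_apply_apply_le [PseudoMetricSpace X] (hT : IsKannanMap β T) (hβ : β < 1) (x : X) :
    dist (T x) (T (T x)) ≤ β / (1 - β) * dist x (T x) := by
  have h := hT x (T x)
  rw [div_mul_eq_mul_div, le_div_iff₀ (by linarith)]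
  linarith

theorem apply_eq_of_tendsto [MetricSpace X] (hT : IsKannanMap β T) (hβ : β < 1)
    {ι : Type*} {l : Filter ι} [l.NeBot] {u : ι → X} {x : X}
    (hu : Tendsto u l (𝓝 x)) (hTu : Tendsto (T ∘ u) l (𝓝 x)) : T x = x := by
  have hbound : ∀ i, (1 - β) * dist x (T x) ≤ dist x (T (u i)) + β * dist (u i) (T (u i)) := by
    intro i
    have := hT (u i) x
    have := dist_triangle x (T (u i)) (T x)
    linarith
  have hlim : Tendsto (fun i ↦ dist x (T (u i)) + β * dist (u i) (T (u i))) l (𝓝 0) := by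
    simpa using ((tendsto_const_nhds (x := x)).dist hTu).add ((hu.dist hTu).const_mul β)
  have hle : (1 - β) * dist x (T x) ≤ 0 := ge_of_tendsto' hlim hbound
  have hdist : dist x (T x) ≤ 0 := nonpos_of_mul_nonpos_right hle (by linarith)
  exact (dist_le_zero.mp hdist).symm

theorem eq_of_apply_eq [MetricSpace X] (hT : IsKannanMap β T) {x y : X} (hx : T x = x)
    (hy : T y = y) : x = y := by
  have := hT x y
  rw [hx, hy, dist_self, dist_self, add_zero, mul_zero] at this
  exact dist_le_zero.mp this

end IsKannanMap

theorem kannan_fixed_point {X : Type*} [MetricSpace X] [CompleteSpace X] [Nonempty X]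
    (T : X → X) (β : ℝ) (hβ0 : 0 ≤ β) (hβ : β < 1 / 2)
    (hT : ∀ x y : X, dist (T x) (T y) ≤ β * (dist x (T x) + dist y (T y))) :
    ∃! x : X, T x = x := by
  have hK : IsKannanMap β T := hT
  have hβ1 : β < 1 := by linarith
  have hr0 : 0 ≤ β / (1 - β) := div_nonneg hβ0 (by linarith)
  have hr1 : β / (1 - β) < 1 := (div_lt_one (by linarith)).2 (by linarith)
  obtain ⟨x₀⟩ := ‹Nonempty X›
  obtain ⟨x, hx⟩ := cauchySeq_tendsto_of_complete <|
    cauchySeq_iterate_of_dist_apply_apply_le_s1 hr0 hr1 (hK.dist_apply_apply_le hβ1) x₀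
  have hTx : T x = x := by
    refine hK.apply_eq_of_tendsto hβ1 hx ?_
    simpa only [Function.comp_def, ← Function.iterate_succ_apply' T] using
      hx.comp (tendsto_add_atTop_nat 1)
  exact ⟨x, hTx, fun y hy ↦ hK.eq_of_apply_eq hy hTx⟩
end

section
/- Let (X, d) be a complete metric space and T : X → X a mapping such that for some β ∈ [0, 1/2), d(Tx, Ty) ≤ β·(d(x,Ty) + d(y,Tx)) for all x, y ∈ X. Then T has a unique fixed point in X. -/
/-!
Putting `y = T x` in the Chatterjea condition and using the triangle inequality gives
`d(T x, T² x) ≤ k · d(x, T x)` with `k = β / (1 - β) < 1`, so every orbit is Cauchy, with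
geometrically decreasing steps. Although `T` need not be continuous, the condition applied to the
limit `x` and the orbit points lets one pass to the limit and get `d(T x, x) ≤ β · d(x, T x)`,
whence `T x = x`. Uniqueness: two fixed points satisfy `d(x, y) ≤ 2β · d(x, y)`.
-/

open Filter Topology Function

section Chatterjea

variable {X : Type*} [MetricSpace X]

def IsChatterjeaMap (β : ℝ) (T : X → X) : Prop :=
  ∀ x y : X, dist (T x) (T y) ≤ β * (dist x (T y) + dist y (T x))

variable {β : ℝ} {T : X → X}

namespace IsChatterjeaMap

theorem dist_apply_apply_le (hT : IsChatterjeaMap β T) (hβ0 : 0 ≤ β) (hβ1 : β < 1) (x : X) :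
    dist (T x) (T (T x)) ≤ β / (1 - β) * dist x (T x) := by
  have h := hT x (T x)
  rw [dist_self, add_zero] at h
  have htri : dist (T x) (T (T x)) ≤ β * (dist x (T x) + dist (T x) (T (T x))) :=
    h.trans (mul_le_mul_of_nonneg_left (dist_triangle _ _ _) hβ0)
  rw [div_mul_eq_mul_div, le_div_iff₀ (by linarith)]
  linarith

theorem dist_iterate_succ_le (hT : IsChatterjeaMap β T) (hβ0 : 0 ≤ β) (hβ1 : β < 1)
    (x : X) (n : ℕ) :
    dist (T^[n] x) (T^[n + 1] x) ≤ dist x (T x) * (β / (1 - β)) ^ n := by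
  induction n with
  | zero => simp
  | succ n ih =>
    have hk0 : 0 ≤ β / (1 - β) := div_nonneg hβ0 (by linarith)
    calc dist (T^[n + 1] x) (T^[n + 2] x)
        = dist (T (T^[n] x)) (T (T (T^[n] x))) := by
          simp only [iterate_succ_apply']
      _ ≤ β / (1 - β) * dist (T^[n] x) (T (T^[n] x)) := hT.dist_apply_apply_le hβ0 hβ1 _
      _ ≤ β / (1 - β) * (dist x (T x) * (β / (1 - β)) ^ n) := by
          rw [← iterate_succ_apply' T n x]
          exact mul_le_mul_of_nonneg_left ih hk0
      _ = dist x (T x) * (β / (1 - β)) ^ (n + 1) := by ring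

theorem cauchySeq_iterate (hT : IsChatterjeaMap β T) (hβ0 : 0 ≤ β) (hβ : β < 1 / 2) (x : X) :
    CauchySeq fun n ↦ T^[n] x :=
  cauchySeq_of_le_geometric _ _ ((div_lt_one (by linarith)).2 (by linarith))
    (hT.dist_iterate_succ_le hβ0 (by linarith) x)

theorem isFixedPt_of_tendsto_iterate (hT : IsChatterjeaMap β T) (hβ1 : β < 1) {x₀ x : X}
    (hx : Tendsto (fun n ↦ T^[n] x₀) atTop (𝓝 x)) : IsFixedPt T x := by
  have hx' : Tendsto (fun n ↦ T (T^[n] x₀)) atTop (𝓝 x) := by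
    simpa only [iterate_succ_apply'] using (tendsto_add_atTop_iff_nat 1).mpr hx
  have hle : dist (T x) x ≤ β * (dist x x + dist x (T x)) :=
    le_of_tendsto_of_tendsto' (tendsto_const_nhds.dist hx')
      ((tendsto_const_nhds.dist hx').add (hx.dist tendsto_const_nhds) |>.const_mul β)
      fun n ↦ hT x (T^[n] x₀)
  rw [dist_self, zero_add, dist_comm x] at hle
  exact dist_le_zero.mp (by nlinarith [dist_nonneg (x := T x) (y := x)])

theorem eq_of_isFixedPt (hT : IsChatterjeaMap β T) (hβ : β < 1 / 2) {x y : X}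
    (hx : IsFixedPt T x) (hy : IsFixedPt T y) : x = y := by
  have h := hT x y
  rw [hx, hy, dist_comm y x] at h
  exact dist_le_zero.mp (by nlinarith [dist_nonneg (x := x) (y := y)])

end IsChatterjeaMap

end Chatterjea

theorem chatterjea_fixed_point {X : Type*} [MetricSpace X] [CompleteSpace X] [Nonempty X]
    (T : X → X) (β : ℝ) (hβ0 : 0 ≤ β) (hβ : β < 1 / 2)
    (hT : ∀ x y : X, dist (T x) (T y) ≤ β * (dist x (T y) + dist y (T x))) :
    ∃! x : X, T x = x := by
  have hT : IsChatterjeaMap β T := hT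
  obtain ⟨x₀⟩ := ‹Nonempty X›
  obtain ⟨x, hx⟩ := cauchySeq_tendsto_of_complete (hT.cauchySeq_iterate hβ0 hβ x₀)
  have hfix : IsFixedPt T x := hT.isFixedPt_of_tendsto_iterate (by linarith) hx
  exact ⟨x, hfix, fun y hy ↦ hT.eq_of_isFixedPt hβ hy hfix⟩
end

section
/- Let (X, d) be a complete metric space and T : X → X a mapping such that for some nonnegative reals α, β, γ with α + β + γ < 1, d(Tx, Ty) ≤ α·d(x,y) + β·d(x,Tx) + γ·d(y,Ty) for all x, y ∈ X. Then T has a unique fixed point in X. -/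
/-!
Put `k = (α + β) / (1 - γ) < 1`. Applying the Reich inequality to `x` and `T x` gives
`d(T x, T² x) ≤ k · d(x, T x)`, so every orbit has geometrically decreasing steps and converges.
Although `T` need not be continuous, applying the inequality to the limit `y` and the orbit
points yields `d(T y, y) ≤ β · d(y, T y)` in the limit, so `y` is fixed; and two fixed points
`x, y` satisfy `d(x, y) ≤ α · d(x, y)`.
-/

open Filter Topology Function

def IsReichMap {X : Type*} [MetricSpace X] (T : X → X) (α β γ : ℝ) : Prop :=
  ∀ x y, dist (T x) (T y) ≤ α * dist x y + β * dist x (T x) + γ * dist y (T y)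

namespace IsReichMap

variable {X : Type*} [MetricSpace X] {T : X → X} {α β γ : ℝ}

theorem dist_map_map_le (hT : IsReichMap T α β γ) (hγ : γ < 1) (x : X) :
    dist (T x) (T (T x)) ≤ (α + β) / (1 - γ) * dist x (T x) := by
  have h := hT x (T x)
  rw [div_mul_eq_mul_div, le_div_iff₀ (by linarith)]
  linarith

theorem dist_iterate_succ_le_geometric (hT : IsReichMap T α β γ) (hαβ : 0 ≤ α + β)
    (hγ : γ < 1) (x : X) (n : ℕ) :
    dist (T^[n] x) (T^[n + 1] x) ≤ dist x (T x) * ((α + β) / (1 - γ)) ^ n := by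
  induction n with
  | zero => simp
  | succ n ih =>
    rw [iterate_succ_apply' T (n + 1), iterate_succ_apply' T n]
    calc dist (T (T^[n] x)) (T (T (T^[n] x)))
        ≤ (α + β) / (1 - γ) * dist (T^[n] x) (T (T^[n] x)) := hT.dist_map_map_le hγ _
      _ ≤ (α + β) / (1 - γ) * (dist x (T x) * ((α + β) / (1 - γ)) ^ n) := by
        rw [← iterate_succ_apply' T n]
        exact mul_le_mul_of_nonneg_left ih (div_nonneg hαβ (by linarith))
      _ = dist x (T x) * ((α + β) / (1 - γ)) ^ (n + 1) := by ring

theorem cauchySeq_iterate (hT : IsReichMap T α β γ) (hαβ : 0 ≤ α + β)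
    (hsum : α + β + γ < 1) (x : X) : CauchySeq fun n ↦ T^[n] x :=
  have hγ : γ < 1 := by linarith
  cauchySeq_of_le_geometric _ _ ((div_lt_one (by linarith)).mpr (by linarith))
    (hT.dist_iterate_succ_le_geometric hαβ hγ x)

theorem isFixedPt_of_tendsto_iterate (hT : IsReichMap T α β γ) (hβ : β < 1) {x y : X}
    (hy : Tendsto (fun n ↦ T^[n] x) atTop (𝓝 y)) : IsFixedPt T y := by
  have hy' : Tendsto (fun n ↦ T^[n + 1] x) atTop (𝓝 y) := hy.comp (tendsto_add_atTop_nat 1)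
  have hlhs : Tendsto (fun n ↦ dist (T y) (T^[n + 1] x)) atTop (𝓝 (dist (T y) y)) :=
    tendsto_const_nhds.dist hy'
  have hrhs : Tendsto
      (fun n ↦ α * dist y (T^[n] x) + β * dist y (T y) + γ * dist (T^[n] x) (T^[n + 1] x))
      atTop (𝓝 (α * dist y y + β * dist y (T y) + γ * dist y y)) :=
    ((tendsto_const_nhds.dist hy).const_mul α |>.add_const _).add
      ((hy.dist hy').const_mul γ)
  have hle : dist (T y) y ≤ β * dist y (T y) := by
    simpa using le_of_tendsto_of_tendsto' hlhs hrhs fun n ↦ by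
      rw [iterate_succ_apply']
      exact hT y _
  rw [dist_comm y] at hle
  exact dist_le_zero.mp (by nlinarith [dist_nonneg (x := T y) (y := y)])

theorem eq_of_isFixedPt (hT : IsReichMap T α β γ) (hα : α < 1) {x y : X}
    (hx : IsFixedPt T x) (hy : IsFixedPt T y) : x = y := by
  have h := hT x y
  rw [hx, hy, dist_self, dist_self] at h
  exact dist_le_zero.mp (by nlinarith [dist_nonneg (x := x) (y := y)])

end IsReichMap

theorem reich_fixed_point {X : Type*} [MetricSpace X] [CompleteSpace X] [Nonempty X]
    (T : X → X) (α β γ : ℝ)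
    (hα : 0 ≤ α) (hβ : 0 ≤ β) (hγ : 0 ≤ γ) (hsum : α + β + γ < 1)
    (hT : ∀ x y : X, dist (T x) (T y) ≤
      α * dist x y + β * dist x (T x) + γ * dist y (T y)) :
    ∃! x : X, T x = x := by
  have hReich : IsReichMap T α β γ := hT
  obtain ⟨y, hy⟩ := cauchySeq_tendsto_of_complete
    (hReich.cauchySeq_iterate (by linarith) hsum (Classical.arbitrary X))
  have hfix : IsFixedPt T y := hReich.isFixedPt_of_tendsto_iterate (by linarith) hy
  exact ⟨y, hfix, fun x hx ↦ hReich.eq_of_isFixedPt (by linarith) hx hfix⟩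
end

section
/- Let (X, d) be a complete metric space and T : X → X a mapping. Suppose there exist real numbers α ∈ [0,1), β ∈ [0, 1/2), γ ∈ [0, 1/2) such that for each pair x, y ∈ X at least one of the following holds: (i) d(Tx,Ty) ≤ α·d(x,y); (ii) d(Tx,Ty) ≤ β·(d(x,Tx)+d(y,Ty)); (iii) d(Tx,Ty) ≤ γ·(d(x,Ty)+d(y,Tx)). Then T has a unique fixed point in X. -/
/-!
Put `δ = max(α, β / (1 - β), γ / (1 - γ)) < 1`. In each of the three alternatives the triangle
inequality gives `d(Tx, Ty) ≤ δ d(x, y) + 2δ d(y, Tx)`, so `T` is an almost contraction in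
Berinde's sense. With `y = Tx` the last term vanishes, so consecutive Picard iterates shrink by the
factor `δ` and every orbit is Cauchy; with `x` an iterate and `y` the limit, the same inequality
shows that the limit is fixed. Two fixed points `x, y` satisfy `d(x, y) ≤ max(α, 2γ) · d(x, y)`,
hence coincide.
-/

open Filter Function Topology

section FixedPoint

variable {X : Type*} [MetricSpace X] {T : X → X}

section AlmostContraction

variable {δ L : ℝ}

theorem dist_apply_apply_le_of_dist_le_mul_add_mul
    (hT : ∀ x y, dist (T x) (T y) ≤ δ * dist x y + L * dist y (T x)) (x : X) :
    dist (T x) (T (T x)) ≤ δ * dist x (T x) := by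
  simpa using hT x (T x)

theorem dist_iterate_succ_le_geometric_of_dist_le_mul_add_mul (hδ : 0 ≤ δ)
    (hT : ∀ x y, dist (T x) (T y) ≤ δ * dist x y + L * dist y (T x)) (x : X) (n : ℕ) :
    dist (T^[n] x) (T^[n + 1] x) ≤ dist x (T x) * δ ^ n := by
  induction n with
  | zero => simp
  | succ n ih =>
    calc dist (T^[n + 1] x) (T^[n + 2] x)
        ≤ δ * dist (T^[n] x) (T^[n + 1] x) := by
          simpa only [iterate_succ_apply'] using
            dist_apply_apply_le_of_dist_le_mul_add_mul hT (T^[n] x)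
      _ ≤ δ * (dist x (T x) * δ ^ n) := by gcongr
      _ = dist x (T x) * δ ^ (n + 1) := by ring

theorem isFixedPt_of_tendsto_of_dist_le_mul_add_mul {ι : Type*} {l : Filter ι} [l.NeBot]
    (hT : ∀ x y, dist (T x) (T y) ≤ δ * dist x y + L * dist y (T x)) {u : ι → X} {z : X}
    (hu : Tendsto u l (𝓝 z)) (hTu : Tendsto (T ∘ u) l (𝓝 z)) : IsFixedPt T z := by
  have hd := ((tendsto_iff_dist_tendsto_zero.1 hu).const_mul δ).add
    ((tendsto_iff_dist_tendsto_zero.1 hTu).const_mul L)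
  rw [mul_zero, mul_zero, add_zero] at hd
  have hTu' : Tendsto (T ∘ u) l (𝓝 (T z)) :=
    tendsto_iff_dist_tendsto_zero.2 <| squeeze_zero (fun _ ↦ dist_nonneg)
      (fun i ↦ (hT (u i) z).trans_eq (by rw [comp_apply, dist_comm z])) hd
  exact tendsto_nhds_unique hTu' hTu

theorem exists_isFixedPt_of_dist_le_mul_add_mul [CompleteSpace X] [Nonempty X] (hδ0 : 0 ≤ δ)
    (hδ1 : δ < 1) (hT : ∀ x y, dist (T x) (T y) ≤ δ * dist x y + L * dist y (T x)) :
    ∃ z, IsFixedPt T z := by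
  obtain ⟨x⟩ := ‹Nonempty X›
  obtain ⟨z, hz⟩ := cauchySeq_tendsto_of_complete <| cauchySeq_of_le_geometric δ _ hδ1
    (dist_iterate_succ_le_geometric_of_dist_le_mul_add_mul hδ0 hT x)
  refine ⟨z, isFixedPt_of_tendsto_of_dist_le_mul_add_mul hT hz ?_⟩
  simpa only [comp_def, ← iterate_succ_apply'] using (tendsto_add_atTop_iff_nat 1).2 hz

end AlmostContraction

theorem dist_le_of_dist_le_kannan {β : ℝ} (hβ0 : 0 ≤ β) (hβ1 : β < 1) {x y : X}
    (h : dist (T x) (T y) ≤ β * (dist x (T x) + dist y (T y))) :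
    dist (T x) (T y) ≤ β / (1 - β) * (dist x y + 2 * dist y (T x)) := by
  rw [div_mul_eq_mul_div, le_div_iff₀ (by linarith)]
  nlinarith [dist_triangle x y (T x), dist_triangle y (T x) (T y)]

theorem dist_le_of_dist_le_chatterjea {γ : ℝ} (hγ0 : 0 ≤ γ) (hγ1 : γ < 1) {x y : X}
    (h : dist (T x) (T y) ≤ γ * (dist x (T y) + dist y (T x))) :
    dist (T x) (T y) ≤ γ / (1 - γ) * (dist x y + 2 * dist y (T x)) := by
  rw [div_mul_eq_mul_div, le_div_iff₀ (by linarith)]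
  nlinarith [dist_triangle x y (T y), dist_triangle y (T x) (T y)]

noncomputable def zamfirescuRatio (α β γ : ℝ) : ℝ := max α (max (β / (1 - β)) (γ / (1 - γ)))

theorem zamfirescuRatio_nonneg {α β γ : ℝ} (hβ0 : 0 ≤ β) (hβ1 : β < 1) :
    0 ≤ zamfirescuRatio α β γ :=
  (div_nonneg hβ0 (by linarith)).trans (le_max_of_le_right (le_max_left _ _))

theorem zamfirescuRatio_lt_one {α β γ : ℝ} (hα : α < 1) (hβ : β < 1 / 2) (hγ : γ < 1 / 2) :
    zamfirescuRatio α β γ < 1 :=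
  max_lt hα (max_lt ((div_lt_one (by linarith)).2 (by linarith))
    ((div_lt_one (by linarith)).2 (by linarith)))

def IsZamfirescu (T : X → X) (α β γ : ℝ) : Prop :=
  ∀ x y : X,
    dist (T x) (T y) ≤ α * dist x y ∨
    dist (T x) (T y) ≤ β * (dist x (T x) + dist y (T y)) ∨
    dist (T x) (T y) ≤ γ * (dist x (T y) + dist y (T x))

namespace IsZamfirescu

variable {α β γ : ℝ}

theorem dist_le (hT : IsZamfirescu T α β γ) (hβ0 : 0 ≤ β) (hβ1 : β < 1) (hγ0 : 0 ≤ γ)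
    (hγ1 : γ < 1) (x y : X) :
    dist (T x) (T y) ≤ zamfirescuRatio α β γ * dist x y +
      2 * zamfirescuRatio α β γ * dist y (T x) := by
  set δ := zamfirescuRatio α β γ
  have hδ0 : 0 ≤ δ := zamfirescuRatio_nonneg hβ0 hβ1
  suffices dist (T x) (T y) ≤ δ * (dist x y + 2 * dist y (T x)) by linarith
  rcases hT x y with h | h | h
  · calc dist (T x) (T y) ≤ α * dist x y := h
      _ ≤ δ * dist x y := by gcongr; exact le_max_left _ _
      _ ≤ δ * (dist x y + 2 * dist y (T x)) := by gcongr; simp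
  · refine (dist_le_of_dist_le_kannan hβ0 hβ1 h).trans ?_
    gcongr
    exact le_max_of_le_right (le_max_left _ _)
  · refine (dist_le_of_dist_le_chatterjea hγ0 hγ1 h).trans ?_
    gcongr
    exact le_max_of_le_right (le_max_right _ _)

theorem eq_of_isFixedPt (hT : IsZamfirescu T α β γ) (hα : α < 1) (hγ : γ < 1 / 2) {x y : X}
    (hx : IsFixedPt T x) (hy : IsFixedPt T y) : x = y := by
  have h := hT x y
  rw [hx.eq, hy.eq, dist_comm y x] at h
  simp only [dist_self, add_zero, mul_zero] at h
  rw [← dist_le_zero]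
  rcases h with h | h | h <;> nlinarith [dist_nonneg (x := x) (y := y)]

end IsZamfirescu

end FixedPoint

theorem zamfirescu_fixed_point_general {X : Type*} [MetricSpace X] [CompleteSpace X] [Nonempty X]
    (T : X → X) (α β γ : ℝ)
    (hα : α < 1) (hβ0 : 0 ≤ β) (hβ : β < 1 / 2) (hγ0 : 0 ≤ γ) (hγ : γ < 1 / 2)
    (hT : ∀ x y : X,
      dist (T x) (T y) ≤ α * dist x y ∨
      dist (T x) (T y) ≤ β * (dist x (T x) + dist y (T y)) ∨
      dist (T x) (T y) ≤ γ * (dist x (T y) + dist y (T x))) :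
    ∃! x : X, T x = x := by
  obtain ⟨z, hz⟩ := exists_isFixedPt_of_dist_le_mul_add_mul
    (zamfirescuRatio_nonneg hβ0 (by linarith)) (zamfirescuRatio_lt_one hα hβ hγ)
    (IsZamfirescu.dist_le hT hβ0 (by linarith) hγ0 (by linarith))
  exact ⟨z, hz, fun y hy ↦ IsZamfirescu.eq_of_isFixedPt hT hα hγ hy hz⟩

theorem zamfirescu_fixed_point {X : Type*} [MetricSpace X] [CompleteSpace X] [Nonempty X]
    (T : X → X) (α β γ : ℝ)
    (hα0 : 0 ≤ α) (hα : α < 1) (hβ0 : 0 ≤ β) (hβ : β < 1 / 2) (hγ0 : 0 ≤ γ) (hγ : γ < 1 / 2)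
    (hT : ∀ x y : X,
      dist (T x) (T y) ≤ α * dist x y ∨
      dist (T x) (T y) ≤ β * (dist x (T x) + dist y (T y)) ∨
      dist (T x) (T y) ≤ γ * (dist x (T y) + dist y (T x))) :
    ∃! x : X, T x = x :=
  zamfirescu_fixed_point_general T α β γ hα hβ0 hβ hγ0 hγ hT
end

section
/- Let T : X → X satisfy the Hardy–Rogers condition: for nonnegative reals α, β, γ, δ, η with α + β + γ + δ + η < 1, d(Tx, Ty) ≤ α·d(x,y) + β·d(x,Tx) + γ·d(y,Ty) + δ·d(x,Ty) + η·d(y,Tx) for all x, y. Then for every x₀ ∈ X, the Picard iteration sequence xₙ₊₁ = T xₙ is a Cauchy sequence. -/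
/-!
Writing `a = d(Tx, T²x)` and `b = d(x, Tx)`, add the Hardy–Rogers inequality for the pairs
`(x, Tx)` and `(Tx, x)` and bound `d(x, T²x) ≤ a + b`: this gives
`(2 - β - γ - δ - η) a ≤ (2α + β + γ + δ + η) b`, so consecutive distances of the orbit shrink
by the factor `k = (2α + β + γ + δ + η) / (2 - β - γ - δ - η)`, which is `< 1` exactly because
`α + β + γ + δ + η < 1`. The orbit is then Cauchy by comparison with a geometric series.
-/

section AsymptoticRegularity

variable {X : Type*} [PseudoMetricSpace X] {f : X → X} {k : ℝ}

theorem dist_iterate_succ_le_geometric_of_dist_le_mul (hk0 : 0 ≤ k)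
    (hf : ∀ x, dist (f x) (f (f x)) ≤ k * dist x (f x)) (x : X) (n : ℕ) :
    dist (f^[n] x) (f^[n + 1] x) ≤ dist x (f x) * k ^ n := by
  induction n generalizing x with
  | zero => simp
  | succ n ih =>
    calc dist (f^[n + 1] x) (f^[n + 1 + 1] x) = dist (f^[n] (f x)) (f^[n + 1] (f x)) := by
          simp only [Function.iterate_succ_apply]
      _ ≤ dist (f x) (f (f x)) * k ^ n := ih (f x)
      _ ≤ k * dist x (f x) * k ^ n := by gcongr; exact hf x
      _ = dist x (f x) * k ^ (n + 1) := by ring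

theorem cauchySeq_iterate_of_dist_le_mul (hk0 : 0 ≤ k) (hk1 : k < 1)
    (hf : ∀ x, dist (f x) (f (f x)) ≤ k * dist x (f x)) (x : X) :
    CauchySeq fun n => f^[n] x :=
  cauchySeq_of_le_geometric k _ hk1 (dist_iterate_succ_le_geometric_of_dist_le_mul hk0 hf x)

end AsymptoticRegularity

theorem hardyRogers_mul_dist_le {X : Type*} [PseudoMetricSpace X] {T : X → X}
    {α β γ δ η : ℝ} (hδ : 0 ≤ δ) (hη : 0 ≤ η)
    (hT : ∀ x y : X, dist (T x) (T y) ≤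
      α * dist x y + β * dist x (T x) + γ * dist y (T y) + δ * dist x (T y) + η * dist y (T x))
    (x : X) :
    (2 - β - γ - δ - η) * dist (T x) (T (T x)) ≤ (2 * α + β + γ + δ + η) * dist x (T x) := by
  have forward := hT x (T x)
  have backward := hT (T x) x
  have hsplit : dist x (T (T x)) ≤ dist x (T x) + dist (T x) (T (T x)) := dist_triangle _ _ _
  rw [dist_comm (T (T x)) (T x), dist_comm (T x) x, dist_self] at backward
  rw [dist_self] at forward
  nlinarith [mul_le_mul_of_nonneg_left hsplit hδ, mul_le_mul_of_nonneg_left hsplit hη]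

theorem hardy_rogers_picard_cauchy {X : Type*} [MetricSpace X]
    (T : X → X) (α β γ δ η : ℝ)
    (hα : 0 ≤ α) (hβ : 0 ≤ β) (hγ : 0 ≤ γ) (hδ : 0 ≤ δ) (hη : 0 ≤ η)
    (hsum : α + β + γ + δ + η < 1)
    (hT : ∀ x y : X, dist (T x) (T y) ≤
      α * dist x y + β * dist x (T x) + γ * dist y (T y) + δ * dist x (T y) + η * dist y (T x))
    (x₀ : X) :
    CauchySeq (fun n => T^[n] x₀) := by
  have hden : 0 < 2 - β - γ - δ - η := by linarith
  set k := (2 * α + β + γ + δ + η) / (2 - β - γ - δ - η)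
  have hk0 : 0 ≤ k := div_nonneg (by linarith) hden.le
  have hk1 : k < 1 := (div_lt_one hden).2 (by linarith)
  refine cauchySeq_iterate_of_dist_le_mul hk0 hk1 (fun x => ?_) x₀
  rw [div_mul_eq_mul_div, le_div_iff₀ hden, mul_comm]
  exact hardyRogers_mul_dist_le hδ hη hT x
end

section
/- Let X be a separable Banach space, (Ω, Σ) a measurable space, and T : Ω × X → X a map such that ω ↦ T(ω, x) is measurable for each x, and for each ω the map x ↦ T(ω, x) satisfies the Hardy–Rogers condition ‖T(ω,x₁) − T(ω,x₂)‖ ≤ α₁‖x₁ − x₂‖ + α₂‖x₁ − T(ω,x₁)‖ + α₃‖x₂ − T(ω,x₂)‖ + α₄‖x₁ − T(ω,x₂)‖ + α₅‖x₂ − T(ω,x₁)‖ with fixed constants αᵢ ≥ 0 and α₁+α₂+α₃+α₄+α₅ < 1. Then there exists a measurable function x* : Ω → X such that T(ω, x*(ω)) = x*(ω) for all ω ∈ Ω, and for each ω this fixed point is unique. -/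
/-!
Each `T ω` is a Hardy–Rogers contraction. Applying the condition to the pairs `(x, T x)` and
`(T x, x)` and adding shows that `T` shrinks the displacement `‖x - T x‖` by a factor `k < 1`, so
the Picard iterates are Cauchy and their limit is a fixed point; the condition at two fixed points
forces them to coincide. Near the fixed point `z` the displacement is comparable to the distance
to `z`. Hence, enumerating a countable dense set, the first point of displacement `< 1/(n+1)` is a
measurable function of `ω` and converges to `z ω`.
-/

open Filter Topology Function

theorem dist_iterate_succ_le_of_dist_apply_apply_le {X : Type*} [PseudoMetricSpace X]
    {f : X → X} {k : ℝ} (hk : 0 ≤ k) (h : ∀ x, dist (f x) (f (f x)) ≤ k * dist x (f x))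
    (x : X) (n : ℕ) : dist (f^[n] x) (f^[n + 1] x) ≤ dist x (f x) * k ^ n := by
  induction n with
  | zero => simp
  | succ n ih =>
    rw [iterate_succ_apply'] at ih
    calc dist (f^[n + 1] x) (f^[n + 2] x) = dist (f (f^[n] x)) (f (f (f^[n] x))) := by
          simp only [iterate_succ_apply']
      _ ≤ k * dist (f^[n] x) (f (f^[n] x)) := h _
      _ ≤ k * (dist x (f x) * k ^ n) := by gcongr
      _ = dist x (f x) * k ^ (n + 1) := by ring

theorem measurable_of_tendsto_of_dist_le_mul {Ω X : Type*} [MeasurableSpace Ω] [MetricSpace X]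
    [TopologicalSpace.SeparableSpace X] [Nonempty X] [MeasurableSpace X] [BorelSpace X]
    {g : Ω → X → ℝ} {z : Ω → X} {C : ℝ} (hg : ∀ x, Measurable fun ω => g ω x)
    (hgz : ∀ ω, Tendsto (g ω) (𝓝 (z ω)) (𝓝 0)) (hC : 0 ≤ C)
    (hz : ∀ ω x, dist x (z ω) ≤ C * g ω x) : Measurable z := by
  classical
  set u := TopologicalSpace.denseSeq X
  have hex : ∀ (n : ℕ) ω, ∃ j, g ω (u j) < 1 / ((n : ℝ) + 1) := by
    intro n ω
    have hdense : ∃ᶠ x in 𝓝 (z ω), x ∈ Set.range u := mem_closure_iff_frequently.1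
      ((TopologicalSpace.denseRange_denseSeq X).closure_range ▸ Set.mem_univ _)
    obtain ⟨_, ⟨j, rfl⟩, hj⟩ :=
      (hdense.and_eventually ((hgz ω).eventually (gt_mem_nhds Nat.one_div_pos_of_nat))).exists
    exact ⟨j, hj⟩
  have hmeas : ∀ n, Measurable fun ω => u (Nat.find (hex n ω)) := fun n =>
    measurable_from_top.comp
      (measurable_find _ fun j => measurableSet_lt (hg (u j)) measurable_const)
  refine measurable_of_tendsto_metrizable hmeas (tendsto_pi_nhds.2 fun ω => ?_)
  rw [tendsto_iff_dist_tendsto_zero]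
  refine squeeze_zero (fun _ => dist_nonneg)
    (fun n => (hz ω _).trans (mul_le_mul_of_nonneg_left (Nat.find_spec (hex n ω)).le hC)) ?_
  simpa using tendsto_one_div_add_atTop_nhds_zero_nat.const_mul C

structure IsHardyRogersContraction {X : Type*} [PseudoMetricSpace X] (f : X → X)
    (a b c d e : ℝ) : Prop where
  nonneg_a : 0 ≤ a
  nonneg_b : 0 ≤ b
  nonneg_c : 0 ≤ c
  nonneg_d : 0 ≤ d
  nonneg_e : 0 ≤ e
  sum_lt_one : a + b + c + d + e < 1
  dist_le : ∀ x y, dist (f x) (f y) ≤ a * dist x y + b * dist x (f x) + c * dist y (f y) +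
    d * dist x (f y) + e * dist y (f x)

namespace IsHardyRogersContraction

variable {X : Type*} [MetricSpace X] {f : X → X} {a b c d e : ℝ}

theorem exists_dist_apply_apply_le (hf : IsHardyRogersContraction f a b c d e) :
    ∃ k, 0 ≤ k ∧ k < 1 ∧ ∀ x, dist (f x) (f (f x)) ≤ k * dist x (f x) := by
  have ⟨ha, hb, hc, hd, he, hsum, _⟩ := hf
  have hden : 0 < 2 - (b + c + d + e) := by linarith
  refine ⟨(2 * a + b + c + d + e) / (2 - (b + c + d + e)), by positivity,
    (div_lt_one hden).2 (by linarith), fun x => ?_⟩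
  rw [div_mul_eq_mul_div, le_div_iff₀ hden]
  have h₁ := hf.dist_le x (f x)
  have h₂ := hf.dist_le (f x) x
  have tri := dist_triangle x (f x) (f (f x))
  simp only [dist_self, dist_comm (f (f x)) (f x), dist_comm (f x) x] at h₁ h₂
  linarith [mul_le_mul_of_nonneg_left tri hd, mul_le_mul_of_nonneg_left tri he]

theorem isFixedPt_of_tendsto (hf : IsHardyRogersContraction f a b c d e) {u : ℕ → X} {z : X}
    (hu : Tendsto u atTop (𝓝 z)) (hfu : Tendsto (fun n => dist (u n) (f (u n))) atTop (𝓝 0)) :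
    IsFixedPt f z := by
  have ⟨ha, hb, _, hd, he, hsum, _⟩ := hf
  have bound : ∀ n, (1 - c - d) * dist z (f z) ≤
      (1 + a + d + e) * dist (u n) z + (1 + b + e) * dist (u n) (f (u n)) := by
    intro n
    have h := hf.dist_le (u n) z
    have t₁ := dist_triangle z (u n) (f z)
    have t₂ := dist_triangle (u n) z (f z)
    have t₃ := dist_triangle z (u n) (f (u n))
    have t₄ := dist_triangle (u n) (f (u n)) (f z)
    rw [dist_comm z (u n)] at t₁ t₃
    linarith [mul_le_mul_of_nonneg_left t₂ hd, mul_le_mul_of_nonneg_left t₃ he]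
  have hlim : Tendsto (fun n => (1 + a + d + e) * dist (u n) z + (1 + b + e) * dist (u n) (f (u n)))
      atTop (𝓝 0) := by
    simpa using ((tendsto_iff_dist_tendsto_zero.1 hu).const_mul _).add (hfu.const_mul _)
  have hle : (1 - c - d) * dist z (f z) ≤ 0 := ge_of_tendsto' hlim bound
  exact (dist_le_zero.1 (nonpos_of_mul_nonpos_right hle (by linarith))).symm

theorem exists_isFixedPt [CompleteSpace X] [Nonempty X]
    (hf : IsHardyRogersContraction f a b c d e) : ∃ z, IsFixedPt f z := by
  obtain ⟨k, hk0, hk1, hk⟩ := hf.exists_dist_apply_apply_le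
  obtain ⟨x₀⟩ := ‹Nonempty X›
  have hdist := dist_iterate_succ_le_of_dist_apply_apply_le hk0 hk x₀
  obtain ⟨z, hz⟩ := cauchySeq_tendsto_of_complete (cauchySeq_of_le_geometric k _ hk1 hdist)
  refine ⟨z, hf.isFixedPt_of_tendsto hz ?_⟩
  refine squeeze_zero (fun _ => dist_nonneg) (fun n => ?_)
    (by simpa using (tendsto_pow_atTop_nhds_zero_of_lt_one hk0 hk1).const_mul (dist x₀ (f x₀)))
  simpa only [iterate_succ_apply'] using hdist n

theorem eq_of_isFixedPt (hf : IsHardyRogersContraction f a b c d e) {y z : X}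
    (hy : IsFixedPt f y) (hz : IsFixedPt f z) : y = z := by
  have ⟨_, hb, hc, _, _, hsum, _⟩ := hf
  have h := hf.dist_le y z
  rw [hy, hz] at h
  simp only [dist_self, mul_zero, add_zero, dist_comm z y] at h
  have hle : (1 - a - d - e) * dist y z ≤ 0 := by linarith
  exact dist_le_zero.1 (nonpos_of_mul_nonpos_right hle (by linarith))

theorem dist_apply_le_of_isFixedPt (hf : IsHardyRogersContraction f a b c d e) {z : X}
    (hz : IsFixedPt f z) (x : X) :
    dist (f x) z ≤ (a + d + e) * dist x z + (b + e) * dist x (f x) := by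
  have h := hf.dist_le x z
  rw [hz] at h
  have tri := dist_triangle z x (f x)
  simp only [dist_self, mul_zero, add_zero, dist_comm z x] at h tri
  linarith [mul_le_mul_of_nonneg_left tri hf.nonneg_e]

theorem dist_le_mul_dist_apply_of_isFixedPt (hf : IsHardyRogersContraction f a b c d e) {z : X}
    (hz : IsFixedPt f z) (x : X) :
    dist x z ≤ (1 + b + e) / (1 - a - d - e) * dist x (f x) := by
  have ⟨_, hb, hc, _, _, hsum, _⟩ := hf
  rw [div_mul_eq_mul_div, le_div_iff₀ (by linarith)]
  linarith [hf.dist_apply_le_of_isFixedPt hz x, dist_triangle x (f x) z]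

theorem tendsto_dist_apply_of_isFixedPt (hf : IsHardyRogersContraction f a b c d e) {z : X}
    (hz : IsFixedPt f z) : Tendsto (fun x => dist x (f x)) (𝓝 z) (𝓝 0) := by
  have ⟨ha, _, hc, hd, _, hsum, _⟩ := hf
  have bound : ∀ x, dist x (f x) ≤ (1 + a + d + e) / (1 - b - e) * dist x z := fun x => by
    rw [div_mul_eq_mul_div, le_div_iff₀ (by linarith)]
    linarith [hf.dist_apply_le_of_isFixedPt hz x, dist_triangle x z (f x), dist_comm z (f x)]
  refine squeeze_zero (fun _ => dist_nonneg) bound ?_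
  simpa using (tendsto_iff_dist_tendsto_zero.1 (tendsto_id (x := 𝓝 z))).const_mul
    ((1 + a + d + e) / (1 - b - e))

end IsHardyRogersContraction

theorem random_hardy_rogers_fixed_point_general {Ω : Type*} [MeasurableSpace Ω]
    {X : Type*} [NormedAddCommGroup X] [CompleteSpace X] [Nonempty X]
    [TopologicalSpace.SeparableSpace X] [MeasurableSpace X] [BorelSpace X]
    (T : Ω → X → X) (α₁ α₂ α₃ α₄ α₅ : ℝ)
    (h1 : 0 ≤ α₁) (h2 : 0 ≤ α₂) (h3 : 0 ≤ α₃) (h4 : 0 ≤ α₄) (h5 : 0 ≤ α₅)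
    (hsum : α₁ + α₂ + α₃ + α₄ + α₅ < 1)
    (hmeas : ∀ x : X, Measurable (fun ω => T ω x))
    (hT : ∀ ω : Ω, ∀ x₁ x₂ : X, ‖T ω x₁ - T ω x₂‖ ≤
      α₁ * ‖x₁ - x₂‖ + α₂ * ‖x₁ - T ω x₁‖ + α₃ * ‖x₂ - T ω x₂‖ +
      α₄ * ‖x₁ - T ω x₂‖ + α₅ * ‖x₂ - T ω x₁‖) :
    ∃ xs : Ω → X, Measurable xs ∧
      ∀ ω : Ω, T ω (xs ω) = xs ω ∧ ∀ y : X, T ω y = y → y = xs ω := by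
  have hHR : ∀ ω, IsHardyRogersContraction (T ω) α₁ α₂ α₃ α₄ α₅ := fun ω =>
    ⟨h1, h2, h3, h4, h5, hsum, by simpa only [dist_eq_norm] using hT ω⟩
  choose xs hxs using fun ω => (hHR ω).exists_isFixedPt
  refine ⟨xs, ?_, fun ω => ⟨hxs ω, fun y hy => (hHR ω).eq_of_isFixedPt hy (hxs ω)⟩⟩
  exact measurable_of_tendsto_of_dist_le_mul (fun x => measurable_const.dist (hmeas x))
    (fun ω => (hHR ω).tendsto_dist_apply_of_isFixedPt (hxs ω))
    (div_nonneg (by linarith) (by linarith))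
    (fun ω => (hHR ω).dist_le_mul_dist_apply_of_isFixedPt (hxs ω))

theorem random_hardy_rogers_fixed_point {Ω : Type*} [MeasurableSpace Ω]
    {X : Type*} [NormedAddCommGroup X] [NormedSpace ℝ X] [CompleteSpace X] [Nonempty X]
    [TopologicalSpace.SeparableSpace X] [MeasurableSpace X] [BorelSpace X]
    (T : Ω → X → X) (α₁ α₂ α₃ α₄ α₅ : ℝ)
    (h1 : 0 ≤ α₁) (h2 : 0 ≤ α₂) (h3 : 0 ≤ α₃) (h4 : 0 ≤ α₄) (h5 : 0 ≤ α₅)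
    (hsum : α₁ + α₂ + α₃ + α₄ + α₅ < 1)
    (hmeas : ∀ x : X, Measurable (fun ω => T ω x))
    (hT : ∀ ω : Ω, ∀ x₁ x₂ : X, ‖T ω x₁ - T ω x₂‖ ≤
      α₁ * ‖x₁ - x₂‖ + α₂ * ‖x₁ - T ω x₁‖ + α₃ * ‖x₂ - T ω x₂‖ +
      α₄ * ‖x₁ - T ω x₂‖ + α₅ * ‖x₂ - T ω x₁‖) :
    ∃ xs : Ω → X, Measurable xs ∧
      ∀ ω : Ω, T ω (xs ω) = xs ω ∧ ∀ y : X, T ω y = y → y = xs ω :=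
  random_hardy_rogers_fixed_point_general T α₁ α₂ α₃ α₄ α₅ h1 h2 h3 h4 h5 hsum hmeas hT
end

section
/- Let X be a separable Banach space, (Ω, Σ) a measurable space, and T : Ω × X → X such that ω ↦ T(ω, x) is measurable for each x and for each ω, x ↦ T(ω,x) satisfies the Kannan condition ‖T(ω,x₁) − T(ω,x₂)‖ ≤ β·(‖x₁ − T(ω,x₁)‖ + ‖x₂ − T(ω,x₂)‖) with a fixed constant β ∈ [0, 1/2). Then there exists a measurable function x* : Ω → X with T(ω, x*(ω)) = x*(ω) for all ω, and for each ω the fixed point of T(ω,·) is unique. -/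
/-!
For each fixed `ω`, Kannan's theorem gives a unique fixed point `x*(ω)` of `T(ω, ·)`: the Picard
iterates have successive distances shrinking by the factor `β / (1 - β) < 1`. The residual
`‖x - T(ω, x)‖` is comparable to `‖x - x*(ω)‖` up to the factors `1 - β` and `1 + β`, so picking,
for each `n`, the first point of a countable dense set whose residual is below `1 / (n + 1)`
yields measurable maps converging pointwise to `x*`.
-/

open Filter Topology Function

def KannanWith {X : Type*} [MetricSpace X] (β : ℝ) (f : X → X) : Prop :=
  ∀ x y, dist (f x) (f y) ≤ β * (dist x (f x) + dist y (f y))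

namespace KannanWith

variable {X : Type*} [MetricSpace X] {β : ℝ} {f : X → X}

theorem dist_map_map_le (h : KannanWith β f) (hβ : β < 1) (x : X) :
    dist (f x) (f (f x)) ≤ β / (1 - β) * dist x (f x) := by
  have := h x (f x)
  rw [div_mul_eq_mul_div, le_div_iff₀ (by linarith)]
  linarith

theorem dist_iterate_succ_le (h : KannanWith β f) (hβ0 : 0 ≤ β) (hβ : β < 1) (x : X) (n : ℕ) :
    dist (f^[n] x) (f^[n + 1] x) ≤ dist x (f x) * (β / (1 - β)) ^ n := by
  induction n with
  | zero => simp
  | succ n ih =>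
    have hr : 0 ≤ β / (1 - β) := div_nonneg hβ0 (by linarith)
    calc dist (f^[n + 1] x) (f^[n + 2] x)
        = dist (f (f^[n] x)) (f (f (f^[n] x))) := by
          simp only [iterate_succ_apply']
      _ ≤ β / (1 - β) * dist (f^[n] x) (f (f^[n] x)) := h.dist_map_map_le hβ _
      _ ≤ β / (1 - β) * (dist x (f x) * (β / (1 - β)) ^ n) := by
          rw [← iterate_succ_apply' f n x]
          exact mul_le_mul_of_nonneg_left ih hr
      _ = dist x (f x) * (β / (1 - β)) ^ (n + 1) := by ring

theorem isFixedPt_of_tendsto (h : KannanWith β f) (hβ : β < 1) {u : ℕ → X} {p : X}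
    (hu : Tendsto u atTop (𝓝 p)) (hfu : Tendsto (f ∘ u) atTop (𝓝 p)) : IsFixedPt f p := by
  have hlim : Tendsto (fun n => β * (dist p (f p) + dist (u n) (f (u n)))) atTop
      (𝓝 (β * (dist p (f p) + dist p p))) :=
    ((hu.dist hfu).const_add _).const_mul β
  have key : dist (f p) p ≤ β * dist (f p) p := by
    simpa [dist_comm p (f p)] using
      le_of_tendsto_of_tendsto' (tendsto_const_nhds.dist hfu) hlim fun n => h p (u n)
  exact dist_le_zero.1 (by nlinarith [dist_nonneg (x := f p) (y := p)])

theorem exists_fixedPt [CompleteSpace X] [Nonempty X] (h : KannanWith β f) (hβ0 : 0 ≤ β)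
    (hβ : β < 1 / 2) : ∃ p, IsFixedPt f p := by
  obtain ⟨x⟩ := ‹Nonempty X›
  have hr : β / (1 - β) < 1 := by rw [div_lt_one (by linarith)]; linarith
  obtain ⟨p, hp⟩ := cauchySeq_tendsto_of_complete <|
    cauchySeq_of_le_geometric _ _ hr (h.dist_iterate_succ_le hβ0 (by linarith) x)
  refine ⟨p, h.isFixedPt_of_tendsto (by linarith) hp ?_⟩
  simpa only [comp_def, ← iterate_succ_apply' f] using hp.comp (tendsto_add_atTop_nat 1)

theorem eq_of_isFixedPt (h : KannanWith β f) {x y : X} (hx : IsFixedPt f x)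
    (hy : IsFixedPt f y) : x = y := by
  have := h x y
  rw [hx.eq, hy.eq, dist_self, dist_self] at this
  exact dist_le_zero.1 (by simpa using this)

theorem dist_fixedPt_le (h : KannanWith β f) {p : X} (hp : IsFixedPt f p) (x : X) :
    dist x p ≤ (1 + β) * dist x (f x) :=
  calc dist x p ≤ dist x (f x) + dist (f x) p := dist_triangle _ _ _
    _ = dist x (f x) + dist (f x) (f p) := by rw [hp.eq]
    _ ≤ dist x (f x) + β * (dist x (f x) + dist p (f p)) := add_le_add_right (h x p) _
    _ = (1 + β) * dist x (f x) := by rw [hp.eq, dist_self]; ring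

theorem dist_self_map_le (h : KannanWith β f) (hβ : β < 1) {p : X} (hp : IsFixedPt f p)
    (x : X) : dist x (f x) ≤ dist x p / (1 - β) := by
  have hmap : dist x (f x) ≤ dist x p + β * dist x (f x) :=
    calc dist x (f x) ≤ dist x p + dist p (f x) := dist_triangle _ _ _
      _ = dist x p + dist (f p) (f x) := by rw [hp.eq]
      _ ≤ dist x p + β * (dist p (f p) + dist x (f x)) := add_le_add_right (h p x) _
      _ = dist x p + β * dist x (f x) := by rw [hp.eq, dist_self, zero_add]
  rw [le_div_iff₀ (by linarith)]
  linarith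

theorem tendsto_dist_self_map (h : KannanWith β f) (hβ : β < 1) {p : X} (hp : IsFixedPt f p) :
    Tendsto (fun x => dist x (f x)) (𝓝 p) (𝓝 0) := by
  have hlim : Tendsto (fun x => dist x p / (1 - β)) (𝓝 p) (𝓝 0) := by
    simpa using ((tendsto_id (x := 𝓝 p)).dist (tendsto_const_nhds (x := p))).div_const (1 - β)
  exact squeeze_zero (fun _ => dist_nonneg) (h.dist_self_map_le hβ hp) hlim

end KannanWith

theorem measurable_of_dist_le_mul_residual {Ω X : Type*} [MeasurableSpace Ω] [MetricSpace X]
    [TopologicalSpace.SeparableSpace X] [Nonempty X] [MeasurableSpace X] [BorelSpace X]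
    {F : Ω → X → ℝ} {xs : Ω → X} {C : ℝ} (hC : 0 ≤ C) (hF : ∀ x, Measurable (F · x))
    (hle : ∀ ω x, dist x (xs ω) ≤ C * F ω x) (htend : ∀ ω, Tendsto (F ω) (𝓝 (xs ω)) (𝓝 0)) :
    Measurable xs := by
  obtain ⟨d, hd⟩ := TopologicalSpace.exists_dense_seq X
  have hex : ∀ n : ℕ, ∀ ω, ∃ k, F ω (d k) < 1 / (n + 1) := fun n ω =>
    hd.mem_nhds ((tendsto_order.1 (htend ω)).2 _ Nat.one_div_pos_of_nat)
  classical
  let g : ℕ → Ω → X := fun n ω => d (Nat.find (hex n ω))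
  have hg : ∀ n, Measurable (g n) := fun n =>
    measurable_from_nat.comp <|
      measurable_find _ fun k => measurableSet_lt (hF (d k)) measurable_const
  refine measurable_of_tendsto_metrizable hg <| tendsto_pi_nhds.2 fun ω => ?_
  have hbound : ∀ n : ℕ, dist (g n ω) (xs ω) ≤ C * (1 / (n + 1)) := fun n =>
    (hle ω _).trans <| mul_le_mul_of_nonneg_left (Nat.find_spec (hex n ω)).le hC
  refine tendsto_iff_dist_tendsto_zero.2 <| squeeze_zero (fun _ => dist_nonneg) hbound ?_
  simpa using tendsto_one_div_add_atTop_nhds_zero_nat.const_mul C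

theorem random_kannan_fixed_point_general {Ω : Type*} [MeasurableSpace Ω]
    {X : Type*} [NormedAddCommGroup X] [CompleteSpace X]
    [TopologicalSpace.SeparableSpace X] [MeasurableSpace X] [BorelSpace X]
    (T : Ω → X → X) (β : ℝ) (hβ0 : 0 ≤ β) (hβ : β < 1 / 2)
    (hmeas : ∀ x : X, Measurable (fun ω => T ω x))
    (hT : ∀ ω : Ω, ∀ x₁ x₂ : X, ‖T ω x₁ - T ω x₂‖ ≤
      β * (‖x₁ - T ω x₁‖ + ‖x₂ - T ω x₂‖)) :
    ∃ xs : Ω → X, Measurable xs ∧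
      ∀ ω : Ω, T ω (xs ω) = xs ω ∧ ∀ y : X, T ω y = y → y = xs ω := by
  have hK : ∀ ω, KannanWith β (T ω) := fun ω x y => by
    simpa only [dist_eq_norm] using hT ω x y
  choose xs hxs using fun ω => (hK ω).exists_fixedPt hβ0 hβ
  refine ⟨xs, ?_, fun ω => ⟨hxs ω, fun y hy => (hK ω).eq_of_isFixedPt hy (hxs ω)⟩⟩
  exact measurable_of_dist_le_mul_residual (F := fun ω x => dist x (T ω x)) (by linarith)
    (fun x => measurable_const.dist (hmeas x)) (fun ω => (hK ω).dist_fixedPt_le (hxs ω))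
    (fun ω => (hK ω).tendsto_dist_self_map (by linarith) (hxs ω))

theorem random_kannan_fixed_point {Ω : Type*} [MeasurableSpace Ω]
    {X : Type*} [NormedAddCommGroup X] [NormedSpace ℝ X] [CompleteSpace X] [Nonempty X]
    [TopologicalSpace.SeparableSpace X] [MeasurableSpace X] [BorelSpace X]
    (T : Ω → X → X) (β : ℝ) (hβ0 : 0 ≤ β) (hβ : β < 1 / 2)
    (hmeas : ∀ x : X, Measurable (fun ω => T ω x))
    (hT : ∀ ω : Ω, ∀ x₁ x₂ : X, ‖T ω x₁ - T ω x₂‖ ≤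
      β * (‖x₁ - T ω x₁‖ + ‖x₂ - T ω x₂‖)) :
    ∃ xs : Ω → X, Measurable xs ∧
      ∀ ω : Ω, T ω (xs ω) = xs ω ∧ ∀ y : X, T ω y = y → y = xs ω :=
  random_kannan_fixed_point_general T β hβ0 hβ hmeas hT
end

section
/- Let T : X → X satisfy the Hardy–Rogers condition with constants α, β, γ, δ, η ≥ 0, α + β + γ + δ + η < 1, on a metric space (X,d), and suppose p is a fixed point of T. Then for any x₀ ∈ X, the Picard iterates xₙ = Tⁿ x₀ converge to p. -/
/-! Testing the Hardy–Rogers inequality at the pairs `(x, p)` and `(p, x)` and adding the two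
bounds makes the mixed terms symmetric; after the triangle inequality
`d(x, Tx) ≤ d(x, p) + d(Tx, p)` this gives `d(Tx, p) ≤ k d(x, p)` with
`k = (2α + β + γ + δ + η) / (2 - β - γ - δ - η) < 1`, so the iterates approach `p` geometrically. -/

open Filter Topology

section DistToFixedPoint

variable {X : Type*} [PseudoMetricSpace X] {T : X → X} {p : X} {k : ℝ}

theorem dist_iterate_le_pow_mul (hk : 0 ≤ k) (hT : ∀ x, dist (T x) p ≤ k * dist x p)
    (n : ℕ) (x : X) : dist (T^[n] x) p ≤ k ^ n * dist x p := by
  induction n with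
  | zero => simp
  | succ n ih =>
    calc dist (T^[n + 1] x) p = dist (T (T^[n] x)) p := by rw [Function.iterate_succ_apply']
      _ ≤ k * dist (T^[n] x) p := hT _
      _ ≤ k * (k ^ n * dist x p) := mul_le_mul_of_nonneg_left ih hk
      _ = k ^ (n + 1) * dist x p := by ring

theorem tendsto_iterate_of_dist_map_le_mul (hk : k < 1) (hT : ∀ x, dist (T x) p ≤ k * dist x p)
    (x : X) : Tendsto (fun n ↦ T^[n] x) atTop (𝓝 p) := by
  have hT' : ∀ y, dist (T y) p ≤ max k 0 * dist y p := fun y ↦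
    (hT y).trans (mul_le_mul_of_nonneg_right (le_max_left k 0) dist_nonneg)
  have hgeom : Tendsto (fun n : ℕ ↦ max k 0 ^ n * dist x p) atTop (𝓝 0) := by
    simpa using (tendsto_pow_atTop_nhds_zero_of_lt_one (le_max_right k 0)
      (max_lt hk one_pos)).mul_const (dist x p)
  exact tendsto_iff_dist_tendsto_zero.2 <|
    squeeze_zero (fun _ ↦ dist_nonneg) (dist_iterate_le_pow_mul (le_max_right k 0) hT' · x) hgeom

end DistToFixedPoint

theorem mul_dist_map_le_of_hardyRogers {X : Type*} [PseudoMetricSpace X] {T : X → X}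
    {α β γ δ η : ℝ} (hβ : 0 ≤ β) (hγ : 0 ≤ γ)
    (hT : ∀ x y : X, dist (T x) (T y) ≤
      α * dist x y + β * dist x (T x) + γ * dist y (T y) + δ * dist x (T y) + η * dist y (T x))
    {p : X} (hp : T p = p) (x : X) :
    (2 - β - γ - δ - η) * dist (T x) p ≤ (2 * α + β + γ + δ + η) * dist x p := by
  have hxp := hT x p
  have hpx := hT p x
  rw [hp, dist_self, dist_comm p (T x)] at hxp
  rw [hp, dist_self, dist_comm p (T x), dist_comm p x] at hpx
  have htri : (β + γ) * dist x (T x) ≤ (β + γ) * (dist x p + dist (T x) p) :=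
    mul_le_mul_of_nonneg_left (dist_triangle_right x (T x) p) (add_nonneg hβ hγ)
  linarith

theorem hardy_rogers_picard_converges_general {X : Type*} [MetricSpace X]
    (T : X → X) (α β γ δ η : ℝ)
    (hα : 0 ≤ α) (hβ : 0 ≤ β) (hγ : 0 ≤ γ)
    (hsum : α + β + γ + δ + η < 1)
    (hT : ∀ x y : X, dist (T x) (T y) ≤
      α * dist x y + β * dist x (T x) + γ * dist y (T y) + δ * dist x (T y) + η * dist y (T x))
    (p : X) (hp : T p = p) (x₀ : X) :
    Filter.Tendsto (fun n => T^[n] x₀) Filter.atTop (nhds p) := by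
  have hden : 0 < 2 - β - γ - δ - η := by linarith
  refine tendsto_iterate_of_dist_map_le_mul (k := (2 * α + β + γ + δ + η) / (2 - β - γ - δ - η))
    ((div_lt_one hden).2 (by linarith)) (fun x ↦ ?_) x₀
  rw [div_mul_eq_mul_div, le_div_iff₀ hden, mul_comm]
  exact mul_dist_map_le_of_hardyRogers hβ hγ hT hp x

theorem hardy_rogers_picard_converges {X : Type*} [MetricSpace X]
    (T : X → X) (α β γ δ η : ℝ)
    (hα : 0 ≤ α) (hβ : 0 ≤ β) (hγ : 0 ≤ γ) (hδ : 0 ≤ δ) (hη : 0 ≤ η)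
    (hsum : α + β + γ + δ + η < 1)
    (hT : ∀ x y : X, dist (T x) (T y) ≤
      α * dist x y + β * dist x (T x) + γ * dist y (T y) + δ * dist x (T y) + η * dist y (T x))
    (p : X) (hp : T p = p) (x₀ : X) :
    Filter.Tendsto (fun n => T^[n] x₀) Filter.atTop (nhds p) :=
  hardy_rogers_picard_converges_general T α β γ δ η hα hβ hγ hsum hT p hp x₀
end
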